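/- Let m ≥ 2, 0 < ε < 1, and |λ| < 1. If d·(m−1) ≤ (m−1)·ln(m−1)/ln|λ|^{-1} (Chung's diameter bound for regular graphs) and ln(2m/ε) > ln(m−1), then 3 + 3·d·(m−1) < C_G/√(2·ln|λ|^{-1}) + m + 4, where C_G = ⌈6m·ln(2m/ε)/√(2·ln|λ|^{-1})⌉. -/
import Mathlib


/-- Comparison of the graph-dependent terms of QuACK and DDUCB on regular
graphs (Appendix C.1): under Chung's diameter bound
`d·(m-1) ≤ (m-1)·ln(m-1)/ln|λ|⁻¹` and `ln(2m/ε) > ln(m-1)`, the QuACK term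
`3 + 3·d·(m-1)` is strictly smaller than `C_G/√(2·ln|λ|⁻¹) + m + 4`, where
`C_G = ⌈6m·ln(2m/ε)/√(2·ln|λ|⁻¹)⌉`. -/
theorem quack_graph_term_lt_dducb_regular
    (m : ℕ) (hm : 2 ≤ m) (ε : ℝ) (hε0 : 0 < ε) (hε1 : ε < 1)
    (lam : ℝ) (hlam0 : lam ≠ 0) (hlam1 : |lam| < 1)
    (d : ℕ)
    (hd : (d : ℝ) * (m - 1) ≤ (m - 1) * Real.log (m - 1) / Real.log |lam|⁻¹)
    (hεm : Real.log (2 * m / ε) > Real.log ((m : ℝ) - 1)) :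
    3 + 3 * (d : ℝ) * (m - 1) <
      ((⌈6 * (m : ℝ) * Real.log (2 * m / ε) /
          Real.sqrt (2 * Real.log |lam|⁻¹)⌉ : ℤ) : ℝ) /
        Real.sqrt (2 * Real.log |lam|⁻¹) + m + 4 := by
  have hm2 : (2:ℝ) ≤ (m:ℝ) := by exact_mod_cast hm
  have hm1 : (1:ℝ) ≤ (m:ℝ) - 1 := by linarith
  have habs : 0 < |lam| := abs_pos.mpr hlam0
  have hinv : 1 < |lam|⁻¹ := (one_lt_inv₀ habs).mpr hlam1
  have hL : 0 < Real.log |lam|⁻¹ := Real.log_pos hinv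
  set L := Real.log |lam|⁻¹ with hLdef
  have hs : 0 < Real.sqrt (2 * L) := Real.sqrt_pos.mpr (by linarith)
  have hsq : Real.sqrt (2 * L) * Real.sqrt (2 * L) = 2 * L :=
    Real.mul_self_sqrt (by linarith)
  have hlog1 : 0 ≤ Real.log ((m:ℝ) - 1) := Real.log_nonneg hm1
  set c : ℝ := ((⌈6 * (m : ℝ) * Real.log (2 * m / ε) /
      Real.sqrt (2 * L)⌉ : ℤ) : ℝ) with hcdef
  have hceil : 6 * (m:ℝ) * Real.log (2 * m / ε) / Real.sqrt (2 * L) ≤ c :=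
    Int.le_ceil _
  have h1 : 6 * (m:ℝ) * Real.log (2 * m / ε) / Real.sqrt (2 * L) / Real.sqrt (2 * L)
      ≤ c / Real.sqrt (2 * L) := by
    exact (div_le_div_iff_of_pos_right hs).mpr hceil
  have h2 : 6 * (m:ℝ) * Real.log (2 * m / ε) / Real.sqrt (2 * L) / Real.sqrt (2 * L)
      = 3 * (m:ℝ) * Real.log (2 * m / ε) / L := by
    rw [div_div, hsq]
    ring
  have h3 : 3 * (m:ℝ) * Real.log (2 * m / ε) / L ≤ c / Real.sqrt (2 * L) := h2 ▸ h1
  have h4 : ((m:ℝ) - 1) * Real.log ((m:ℝ) - 1) / L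
      ≤ (m:ℝ) * Real.log (2 * m / ε) / L := by
    gcongr
    nlinarith [hεm.le, hlog1, hm1]
  have h5 : 3 * (d : ℝ) * ((m:ℝ) - 1) ≤ 3 * ((m:ℝ) * Real.log (2 * m / ε) / L) := by
    nlinarith [hd.trans h4]
  have h6 : 3 * ((m:ℝ) * Real.log (2 * m / ε) / L)
      = 3 * (m:ℝ) * Real.log (2 * m / ε) / L := by ring
  linarith [h5, h6 ▸ h3]
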